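/- Let m be a nonnegative integer. Then Y^(m)(n) >= 0 for all nonnegative integers n. -/

import Mathlib

/-! Expanding the geometric series, the coefficient of `q^n` in `seriesC m` is `∑ (-1)^k` over the
factorisations `n = k l` with `l ≥ k + 2m + 1` and `k + l` odd, and that of `seriesB m` is the same
signed count for `2n`. Halving an even `k` and keeping an odd `k` maps the even admissible factors
of `2n` and the odd ones of `n` injectively to the even ones of `n` and the odd ones of `2n`: an odd
`k` arising from `2n` has cofactor `≡ 2 (mod 4)` in `2n`, one arising from `n` has cofactor
`≡ 0 (mod 4)`. Hence the signed count for `n` is at least the one for `2n`. -/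


/-- The geometric series `1/(1-q^k) = ∑_{j ≥ 0} q^{k·j}` as a formal power series over `ℤ`:
its coefficient at `q^n` is `1` exactly when `k ∣ n`. -/
def geomSer (k : ℕ) : PowerSeries ℤ := PowerSeries.mk fun n => if k ∣ n then 1 else 0

/-- The formal power series `∑_{k ≥ 1} (-1)^k q^{k(3k+1)+2mk}/(1-q^{2k})`.
For a fixed `n`, only the (finitely many) summands with `1 ≤ k ≤ n` can contribute to the
coefficient of `q^n` (for `k > n` the lowest exponent `k(3k+1)+2mk` exceeds `n`), so the
coefficient of `q^n` of the infinite sum is the corresponding finite sum of coefficients. -/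
noncomputable def seriesA (m : ℕ) : PowerSeries ℤ :=
  PowerSeries.mk fun n => ∑ k ∈ Finset.Icc 1 n,
    (PowerSeries.coeff (R := ℤ) n)
      (PowerSeries.C (R := ℤ) ((-1) ^ k) * PowerSeries.X ^ (k * (3 * k + 1) + 2 * m * k) *
        geomSer (2 * k))

/-- The formal power series `∑_{k ≥ 1} (-1)^k q^{k(k+1)/2+mk}/(1-q^k)` (same convention). -/
noncomputable def seriesB (m : ℕ) : PowerSeries ℤ :=
  PowerSeries.mk fun n => ∑ k ∈ Finset.Icc 1 n,
    (PowerSeries.coeff (R := ℤ) n)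
      (PowerSeries.C (R := ℤ) ((-1) ^ k) * PowerSeries.X ^ (k * (k + 1) / 2 + m * k) * geomSer k)

/-- The formal power series `∑_{k ≥ 1} (-1)^k q^{k(k+1)+2mk}/(1-q^{2k})` (same convention). -/
noncomputable def seriesC (m : ℕ) : PowerSeries ℤ :=
  PowerSeries.mk fun n => ∑ k ∈ Finset.Icc 1 n,
    (PowerSeries.coeff (R := ℤ) n)
      (PowerSeries.C (R := ℤ) ((-1) ^ k) * PowerSeries.X ^ (k * (k + 1) + 2 * m * k) *
        geomSer (2 * k))

open Finset PowerSeries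

open scoped Classical

def IsAdmissibleFactor (m M k : ℕ) : Prop := ∃ l, M = k * l ∧ k + 2 * m + 1 ≤ l ∧ Odd (k + l)

namespace IsAdmissibleFactor

variable {m n k : ℕ}

theorem of_double_of_even (hk : Even k) (h : IsAdmissibleFactor m (2 * n) (2 * k)) :
    IsAdmissibleFactor m n k := by
  obtain ⟨l, hl, hle, hodd⟩ := h
  exact ⟨l, by linarith, by omega, by grind⟩

theorem double_of_odd (hk : Odd k) (h : IsAdmissibleFactor m n k) :
    IsAdmissibleFactor m (2 * n) k := by
  obtain ⟨l, hl, hle, -⟩ := h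
  exact ⟨2 * l, by rw [hl]; ring, by omega, by grind⟩

theorem of_double_double_of_odd (hk : Odd k) (h : IsAdmissibleFactor m (2 * n) (2 * k)) :
    IsAdmissibleFactor m (2 * n) k := by
  obtain ⟨l, hl, hle, -⟩ := h
  exact ⟨2 * l, by rw [hl]; ring, by omega, by grind⟩

theorem not_double_double_of_odd (hk : Odd k) (h : IsAdmissibleFactor m n k) :
    ¬ IsAdmissibleFactor m (2 * n) (2 * k) := by
  obtain ⟨l, hl, -, hodd⟩ := h
  rintro ⟨l', hl', -, hodd'⟩
  have : l = l' := Nat.eq_of_mul_eq_mul_left hk.pos (by linarith)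
  grind

end IsAdmissibleFactor

theorem coeff_C_mul_X_pow_mul_geomSer (a : ℤ) (e c n : ℕ) :
    coeff n (C a * X ^ e * geomSer c) = if e ≤ n ∧ c ∣ n - e then a else 0 := by
  rw [mul_right_comm, coeff_mul_X_pow']
  by_cases he : e ≤ n
  · rw [coeff_C_mul, geomSer, coeff_mk]
    by_cases hc : c ∣ n - e <;> simp [he, hc]
  · simp [he]

theorem le_and_two_mul_dvd_sub_iff (m n k : ℕ) :
    (k * (k + 1) + 2 * m * k ≤ n ∧ 2 * k ∣ n - (k * (k + 1) + 2 * m * k)) ↔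
      IsAdmissibleFactor m n k := by
  constructor
  · rintro ⟨hle, j, hj⟩
    have : k * (k + 1 + 2 * m + 2 * j) = k * (k + 1) + 2 * m * k + 2 * k * j := by ring
    exact ⟨k + 1 + 2 * m + 2 * j, by omega, by omega, ⟨k + m + j, by ring⟩⟩
  · rintro ⟨l, rfl, hle, hodd⟩
    obtain ⟨j, rfl⟩ : ∃ j, l = k + 1 + 2 * m + 2 * j := ⟨(l - k - 1 - 2 * m) / 2, by grind⟩
    refine ⟨by nlinarith, j, ?_⟩
    have : k * (k + 1 + 2 * m + 2 * j) = k * (k + 1) + 2 * m * k + 2 * k * j := by ring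
    omega

theorem le_and_dvd_sub_iff (m n k : ℕ) :
    (k * (k + 1) / 2 + m * k ≤ n ∧ k ∣ n - (k * (k + 1) / 2 + m * k)) ↔
      IsAdmissibleFactor m (2 * n) k := by
  have htri : 2 * (k * (k + 1) / 2) = k * (k + 1) :=
    Nat.mul_div_cancel' (Nat.even_mul_succ_self k).two_dvd
  have hdouble : k * (k + 1) + 2 * m * k = 2 * (k * (k + 1) / 2 + m * k) := by
    rw [mul_add (2 : ℕ), htri]; ring
  rw [← le_and_two_mul_dvd_sub_iff, hdouble, ← Nat.mul_sub, Nat.mul_dvd_mul_iff_left two_pos,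
    Nat.mul_le_mul_left_iff two_pos]

theorem coeff_seriesC (m n : ℕ) :
    coeff n (seriesC m) = ∑ k ∈ (Icc 1 n).filter (IsAdmissibleFactor m n), (-1) ^ k := by
  rw [seriesC, coeff_mk, sum_filter]
  refine sum_congr rfl fun k _ => ?_
  rw [coeff_C_mul_X_pow_mul_geomSer]
  exact if_congr (le_and_two_mul_dvd_sub_iff m n k) rfl rfl

theorem coeff_seriesB (m n : ℕ) :
    coeff n (seriesB m) = ∑ k ∈ (Icc 1 n).filter (IsAdmissibleFactor m (2 * n)), (-1) ^ k := by
  rw [seriesB, coeff_mk, sum_filter]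
  refine sum_congr rfl fun k _ => ?_
  rw [coeff_C_mul_X_pow_mul_geomSer]
  exact if_congr (le_and_dvd_sub_iff m n k) rfl rfl

theorem sum_neg_one_pow_eq_card_even_sub_card_odd (s : Finset ℕ) :
    ∑ k ∈ s, (-1 : ℤ) ^ k = #(s.filter Even) - #(s.filter Odd) := by
  rw [← sum_filter_add_sum_filter_not s Even,
    sum_congr rfl fun k hk => Even.neg_one_pow (mem_filter.1 hk).2,
    sum_congr rfl fun k hk => Odd.neg_one_pow (Nat.not_even_iff_odd.1 (mem_filter.1 hk).2)]
  simp [sub_eq_add_neg, Nat.not_even_iff_odd]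

theorem card_even_double_add_card_odd_le (m n N : ℕ) :
    #((Icc 1 N).filter fun k => Even k ∧ IsAdmissibleFactor m (2 * n) k) +
        #((Icc 1 N).filter fun k => Odd k ∧ IsAdmissibleFactor m n k) ≤
      #((Icc 1 N).filter fun k => Even k ∧ IsAdmissibleFactor m n k) +
        #((Icc 1 N).filter fun k => Odd k ∧ IsAdmissibleFactor m (2 * n) k) := by
  set s := Icc 1 N
  set evenDouble := s.filter fun k => Even k ∧ IsAdmissibleFactor m (2 * n) k
  set oddN := s.filter fun k => Odd k ∧ IsAdmissibleFactor m n k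
  set evenN := s.filter fun k => Even k ∧ IsAdmissibleFactor m n k
  set oddDouble := s.filter fun k => Odd k ∧ IsAdmissibleFactor m (2 * n) k
  set halves := s.filter fun t => Odd t ∧ IsAdmissibleFactor m (2 * n) (2 * t)
  have heven : evenDouble ⊆ (evenN ∪ halves).image (2 * ·) := by
    intro k hk
    simp only [evenDouble, evenN, halves, s, mem_image, mem_union, mem_filter, mem_Icc] at hk ⊢
    obtain ⟨⟨hk1, hkN⟩, ⟨t, rfl⟩, hadm⟩ := hk
    rw [← two_mul] at hadm
    refine ⟨t, ?_, two_mul t⟩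
    rcases Nat.even_or_odd t with ht | ht
    · exact .inl ⟨⟨by omega, by omega⟩, ht, hadm.of_double_of_even ht⟩
    · exact .inr ⟨⟨by omega, by omega⟩, ht, hadm⟩
  have hodd : oddN ∪ halves ⊆ oddDouble := by
    intro k hk
    simp only [oddN, halves, oddDouble, mem_union, mem_filter] at hk ⊢
    rcases hk with ⟨hks, hk, hadm⟩ | ⟨hks, hk, hadm⟩
    · exact ⟨hks, hk, hadm.double_of_odd hk⟩
    · exact ⟨hks, hk, hadm.of_double_double_of_odd hk⟩
  have hdisj : Disjoint oddN halves :=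
    disjoint_filter.2 fun _ _ h h' => h.2.not_double_double_of_odd h.1 h'.2
  calc #evenDouble + #oddN ≤ #evenN + #halves + #oddN := by
        grw [card_le_card heven, card_image_le, card_union_le]
    _ = #evenN + #(oddN ∪ halves) := by rw [card_union_of_disjoint hdisj]; ring
    _ ≤ #evenN + #oddDouble := by grw [card_le_card hodd]

theorem sum_neg_one_pow_admissible_double_le (m n N : ℕ) :
    ∑ k ∈ (Icc 1 N).filter (IsAdmissibleFactor m (2 * n)), (-1 : ℤ) ^ k ≤
      ∑ k ∈ (Icc 1 N).filter (IsAdmissibleFactor m n), (-1 : ℤ) ^ k := by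
  simp only [sum_neg_one_pow_eq_card_even_sub_card_odd, filter_filter]
  have := card_even_double_add_card_odd_le m n N
  simp only [and_comm (a := IsAdmissibleFactor _ _ _)]
  omega

/-- Let `m` be a nonnegative integer and let `Y^(m)` be defined by
`∑_{n ≥ 0} Y^(m)(n) q^n = ∑_{k≥1} (-1)^k q^{k(k+1)+2mk}/(1-q^{2k})
- ∑_{k≥1} (-1)^k q^{k(k+1)/2+mk}/(1-q^k)`. Then `Y^(m)(n) ≥ 0` for all `n ≥ 0`. -/
theorem stmt3 (m : ℕ) (Y : ℕ → ℤ)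
    (hY : PowerSeries.mk Y = seriesC m - seriesB m)
    (n : ℕ) : 0 ≤ Y n := by
  have hcoeff := congrArg (coeff n) hY
  rw [map_sub, coeff_mk, coeff_seriesC, coeff_seriesB] at hcoeff
  rw [hcoeff, sub_nonneg]
  exact sum_neg_one_pow_admissible_double_le m n n
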